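/- arXiv:2603.02495 — 2 statements merged into one kernel-verified Lean document; each statement's English description precedes it below -/
import Mathlib

section
/- The proxy social welfare function F_p is submodular: for all A ⊆ B ⊆ T and any t ∈ T \ B, F_p(A ∪ {t}) − F_p(A) ≥ F_p(B ∪ {t}) − F_p(B), even when the revealed targets include negatively labeled ones. -/
open Finset

variable {Agent Target : Type*}

def posN [DecidableEq Target] (N : Agent → Finset Target) (f : Target → Bool) (x : Agent) :
    Finset Target :=
  (N x).filter (fun t => f t = true)

def negN [DecidableEq Target] (N : Agent → Finset Target) (f : Target → Bool) (x : Agent) :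
    Finset Target :=
  (N x).filter (fun t => f t = false)

/-- The probability mass agent `x` places on positive targets given revealed set `S`. -/
noncomputable def Q [DecidableEq Target] (N : Agent → Finset Target) (f : Target → Bool)
    (S : Finset Target) (x : Agent) : ℝ :=
  if (posN N f x ∩ S).Nonempty then 1
  else if (N x).Nonempty then
    ((posN N f x).card : ℝ) /
      (((posN N f x).card : ℝ) + (((negN N f x).card : ℝ) - ((negN N f x ∩ S).card : ℝ)))
  else 0

/-- Social welfare. -/
noncomputable def F [Fintype Agent] [DecidableEq Target] (N : Agent → Finset Target)
    (f : Target → Bool) (S : Finset Target) : ℝ :=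
  ∑ x, Q N f S x

/-- The proxy probability mass: revealing negative neighbors beyond the first only
contributes the amount the first one helped. -/
noncomputable def Qp [DecidableEq Target] (N : Agent → Finset Target) (f : Target → Bool)
    (S : Finset Target) (x : Agent) : ℝ :=
  if (posN N f x ∩ S).Nonempty then 1
  else if (N x).Nonempty then
    ((posN N f x).card : ℝ) /
        (((N x).card : ℝ) - (if 1 ≤ (negN N f x ∩ S).card then 1 else 0)) *
      (1 + (((negN N f x ∩ S).card - 1 : ℕ) : ℝ) / ((N x).card : ℝ))
  else 0

/-- Proxy social welfare. -/
noncomputable def Fp [Fintype Agent] [DecidableEq Target] (N : Agent → Finset Target)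
    (f : Target → Bool) (S : Finset Target) : ℝ :=
  ∑ x, Qp N f S x

/-!
Fix an agent `x` with `p` positive and `m` negative neighbours, `n = p + m`. As long as no
positive neighbour is revealed, `Qp` is affine in the number `k` of revealed negative neighbours,
`Qp = p / n + k · p / (n (n - 1))`, and this never exceeds `1`; once a positive neighbour is
revealed, `Qp = 1`. A function of the shape "`1` once `P` is hit, otherwise an increasing affine
function of `|M ∩ S|` bounded by `1`" is monotone with diminishing marginal gains, and so is a
sum of such functions.
-/

section HitOrLinear

variable {α : Type*} [DecidableEq α]

def hitOrLinear (P M : Finset α) (a c : ℝ) (S : Finset α) : ℝ :=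
  if (P ∩ S).Nonempty then 1 else a + c * (M ∩ S).card

theorem card_inter_insert_add_card_inter_le (M : Finset α) {A B : Finset α} (hAB : A ⊆ B)
    (t : α) : (M ∩ insert t B).card + (M ∩ A).card ≤ (M ∩ insert t A).card + (M ∩ B).card := by
  have hunion : M ∩ insert t A ∪ M ∩ B = M ∩ insert t B := by
    rw [← inter_union_distrib_left, insert_union, union_eq_right.2 hAB]
  have hinter : M ∩ A ⊆ M ∩ insert t A ∩ (M ∩ B) := fun u hu => by
    simp only [mem_inter, mem_insert] at hu ⊢
    exact ⟨⟨hu.1, Or.inr hu.2⟩, hu.1, hAB hu.2⟩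
  have hmodular := card_union_add_card_inter (M ∩ insert t A) (M ∩ B)
  rw [hunion] at hmodular
  have := card_le_card hinter
  omega

variable {P M : Finset α} {a c : ℝ}

theorem hitOrLinear_le_one (hc : 0 ≤ c) (hle : a + c * M.card ≤ 1) (S : Finset α) :
    hitOrLinear P M a c S ≤ 1 := by
  unfold hitOrLinear
  split_ifs
  · exact le_rfl
  · refine le_trans ?_ hle
    gcongr
    exact inter_subset_left

theorem hitOrLinear_mono (hc : 0 ≤ c) (hle : a + c * M.card ≤ 1) {S T : Finset α}
    (hST : S ⊆ T) : hitOrLinear P M a c S ≤ hitOrLinear P M a c T := by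
  by_cases hS : (P ∩ S).Nonempty
  · have hT : (P ∩ T).Nonempty := hS.mono (inter_subset_inter_left hST)
    simp only [hitOrLinear, if_pos hS, if_pos hT, le_refl]
  by_cases hT : (P ∩ T).Nonempty
  · simpa only [hitOrLinear, if_pos hT] using hitOrLinear_le_one hc hle S
  simp only [hitOrLinear, if_neg hS, if_neg hT]
  gcongr

theorem hitOrLinear_insert_sub_le (hc : 0 ≤ c) (hle : a + c * M.card ≤ 1) {A B : Finset α}
    (hAB : A ⊆ B) (t : α) :
    hitOrLinear P M a c (insert t B) - hitOrLinear P M a c B ≤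
      hitOrLinear P M a c (insert t A) - hitOrLinear P M a c A := by
  have hgainA : 0 ≤ hitOrLinear P M a c (insert t A) - hitOrLinear P M a c A :=
    sub_nonneg.2 (hitOrLinear_mono hc hle (subset_insert t A))
  by_cases htP : t ∈ P
  · have hhit : ∀ S, hitOrLinear P M a c (insert t S) = 1 := fun S =>
      if_pos ⟨t, mem_inter.2 ⟨htP, mem_insert_self t S⟩⟩
    rw [hhit, hhit]
    linarith [hitOrLinear_mono hc hle (P := P) hAB]
  have hP : ∀ S, P ∩ insert t S = P ∩ S := fun S => inter_insert_of_notMem htP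
  by_cases hB : (P ∩ B).Nonempty
  · simpa only [hitOrLinear, hP, if_pos hB, sub_self] using hgainA
  have hA : ¬(P ∩ A).Nonempty := fun hA => hB (hA.mono (inter_subset_inter_left hAB))
  simp only [hitOrLinear, hP, if_neg hA, if_neg hB]
  have hcard :
      ((M ∩ insert t B).card : ℝ) + (M ∩ A).card ≤ (M ∩ insert t A).card + (M ∩ B).card :=
    mod_cast card_inter_insert_add_card_inter_le M hAB t
  nlinarith [mul_le_mul_of_nonneg_left hcard hc]

end HitOrLinear

theorem proxy_affine_eq {p n k : ℕ} (hn : 0 < n) (hpk : p + k ≤ n) :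
    (p : ℝ) / ((n : ℝ) - (if 1 ≤ k then 1 else 0)) * (1 + ((k - 1 : ℕ) : ℝ) / n) =
      p / n + p / (n * (n - 1)) * k := by
  rcases Nat.eq_zero_or_pos k with rfl | hk
  · simp
  obtain ⟨j, rfl⟩ := Nat.exists_eq_add_of_lt hk
  rcases Nat.lt_or_ge n 2 with hn1 | hn2
  · obtain rfl : p = 0 := by omega
    simp
  have hn2' : (2 : ℝ) ≤ n := mod_cast hn2
  have hn1' : (n : ℝ) - 1 ≠ 0 := by linarith
  simp only [zero_add, le_add_iff_nonneg_left, zero_le, if_true, Nat.add_sub_cancel]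
  field_simp
  push_cast
  ring

theorem natCast_mul_natCast_sub_one_nonneg (n : ℕ) : (0 : ℝ) ≤ n * (n - 1) := by
  cases n <;> simp
  positivity

theorem div_add_div_mul_le_one (p m : ℕ) :
    (p : ℝ) / (p + m) + p / ((p + m) * (p + m - 1)) * m ≤ 1 := by
  rcases Nat.lt_or_ge (p + m) 2 with hlt | hge
  · obtain ⟨rfl, rfl⟩ | ⟨rfl, rfl⟩ | ⟨rfl, rfl⟩ :
        (p = 0 ∧ m = 0) ∨ (p = 1 ∧ m = 0) ∨ (p = 0 ∧ m = 1) := by omega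
    all_goals norm_num
  have hge' : (2 : ℝ) ≤ p + m := mod_cast hge
  have hslack : (p : ℝ) / (p + m) + p / ((p + m) * (p + m - 1)) * m =
      1 - m * (m - 1) / ((p + m) * (p + m - 1)) := by
    have : (p : ℝ) + m - 1 ≠ 0 := by linarith
    field_simp
    ring
  rw [hslack, sub_le_self_iff]
  exact div_nonneg (natCast_mul_natCast_sub_one_nonneg m)
    (by exact_mod_cast natCast_mul_natCast_sub_one_nonneg (p + m))

section Agent

variable [DecidableEq Target] (N : Agent → Finset Target) (f : Target → Bool)

theorem card_posN_add_card_negN (x : Agent) :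
    (posN N f x).card + (negN N f x).card = (N x).card := by
  simpa only [posN, negN, Bool.not_eq_true] using
    card_filter_add_card_filter_not (s := N x) (fun u => f u = true)

theorem Qp_eq_hitOrLinear (S : Finset Target) (x : Agent) :
    Qp N f S x = hitOrLinear (posN N f x) (negN N f x) ((posN N f x).card / (N x).card)
      ((posN N f x).card / ((N x).card * ((N x).card - 1))) S := by
  have hsum := card_posN_add_card_negN N f x
  by_cases hpos : (posN N f x ∩ S).Nonempty
  · simp only [Qp, hitOrLinear, if_pos hpos]
  rw [Qp, hitOrLinear, if_neg hpos, if_neg hpos]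
  by_cases hN : (N x).Nonempty
  · have hk : (negN N f x ∩ S).card ≤ (negN N f x).card := card_le_card inter_subset_left
    rw [if_pos hN]
    exact proxy_affine_eq (card_pos.2 hN) (by omega)
  · have hcard : (N x).card = 0 := card_eq_zero.2 (not_nonempty_iff_eq_empty.1 hN)
    have hp : (posN N f x).card = 0 := by omega
    simp [hN, hp]

end Agent

theorem proxy_welfare_submodular_general [Fintype Agent] [DecidableEq Target]
    (N : Agent → Finset Target) (f : Target → Bool)
    (A B : Finset Target) (t : Target) (hAB : A ⊆ B) :
    Fp N f (insert t B) - Fp N f B ≤ Fp N f (insert t A) - Fp N f A := by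
  simp only [Fp, ← sum_sub_distrib, Qp_eq_hitOrLinear]
  refine sum_le_sum fun x _ => hitOrLinear_insert_sub_le
    (div_nonneg (Nat.cast_nonneg _) (natCast_mul_natCast_sub_one_nonneg _)) ?_ hAB t
  have hsum : ((N x).card : ℝ) = (posN N f x).card + (negN N f x).card :=
    mod_cast (card_posN_add_card_negN N f x).symm
  rw [hsum]
  exact div_add_div_mul_le_one _ _

/-- The proxy social welfare function is submodular, even when the revealed targets
include negatively labeled ones. -/
theorem proxy_welfare_submodular [Fintype Agent] [DecidableEq Target]
    (N : Agent → Finset Target) (f : Target → Bool)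
    (A B : Finset Target) (t : Target) (hAB : A ⊆ B) (htB : t ∉ B) :
    Fp N f (insert t B) - Fp N f B ≤ Fp N f (insert t A) - Fp N f A :=
  proxy_welfare_submodular_general N f A B t hAB
end

section
/- In the grouped setting restricted to revealing positive targets, allocating budget K_a = ⌈K/w⌉ to each group a and running greedy separately on each group yields, for every group a, welfare gain G(S_{K_a}) ≥ ((1 − 1/e)/w) · OPT_a^K, where OPT_a^K is the maximum welfare gain achievable for group a alone with full budget K. -/
open Finset

variable {Agent Target : Type*}

/-- The welfare gain of group `A` from revealing `S`. -/
noncomputable def Ggain [DecidableEq Target] (N : Agent → Finset Target) (f : Target → Bool)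
    (A : Finset Agent) (S : Finset Target) : ℝ :=
  ∑ x ∈ A, Q N f S x - ∑ x ∈ A, Q N f ∅ x

/-- A greedy reveal sequence with candidates drawn from `C`: start from `∅` and at each
step insert a candidate target of maximal resulting objective value. -/
def IsGreedyOn [DecidableEq Target] (C : Finset Target) (g : Finset Target → ℝ)
    (seq : ℕ → Finset Target) : Prop :=
  seq 0 = ∅ ∧ ∀ i : ℕ, ∃ t ∈ C, seq (i + 1) = insert t (seq i) ∧
    ∀ t' ∈ C, g (insert t' (seq i)) ≤ g (insert t (seq i))

/-! On sets of positive targets nothing negative is revealed, so `Q N f S x` is either `1`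
(some positive neighbour of `x` is revealed) or its value `Q N f ∅ x` at `∅`. The gain of a
group is therefore a weighted coverage function with weights `1 - Q N f ∅ x ≥ 0`, hence
monotone and submodular. Greedy with budget `k` reaches a `1 - (1 - 1/k)^k ≥ 1 - 1/e`
fraction of the best `k`-set, and a set of size `K ≤ w k` splits into `w` sets of size at
most `k`, so by subadditivity the best `K`-set is worth at most `w` times the best `k`-set. -/

section SetFunction

variable {α : Type*}

theorem monotone_sum {ι : Type*} {A : Finset ι} {c : ι → ℝ} {g : ι → Finset α → ℝ}
    (hc : ∀ i ∈ A, 0 ≤ c i) (hg : ∀ i ∈ A, Monotone (g i)) :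
    Monotone fun S => ∑ i ∈ A, c i * g i S :=
  fun _ _ hST => Finset.sum_le_sum fun i hi => mul_le_mul_of_nonneg_left (hg i hi hST) (hc i hi)

variable [DecidableEq α]

def IsSubmodular (g : Finset α → ℝ) : Prop :=
  ∀ ⦃S S' : Finset α⦄, S ⊆ S' → ∀ ⦃t⦄, t ∉ S' → g (insert t S') - g S' ≤ g (insert t S) - g S

theorem IsSubmodular.sum {ι : Type*} {A : Finset ι} {c : ι → ℝ} {g : ι → Finset α → ℝ}
    (hc : ∀ i ∈ A, 0 ≤ c i) (hg : ∀ i ∈ A, IsSubmodular (g i)) :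
    IsSubmodular fun S => ∑ i ∈ A, c i * g i S := by
  intro S S' hSS' t ht
  simp only [← Finset.sum_sub_distrib, ← mul_sub]
  exact Finset.sum_le_sum fun i hi => mul_le_mul_of_nonneg_left (hg i hi hSS' ht) (hc i hi)

variable {g : Finset α → ℝ}

theorem IsSubmodular.union_sub_le_sum (hg : IsSubmodular g) (S T : Finset α) :
    g (S ∪ T) - g S ≤ ∑ t ∈ T, (g (insert t S) - g S) := by
  induction T using Finset.induction_on with
  | empty => simp
  | insert t T htT ih =>
    rw [Finset.sum_insert htT, Finset.union_insert]
    by_cases htS : t ∈ S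
    · simpa [Finset.insert_eq_of_mem (Finset.mem_union_left T htS),
        Finset.insert_eq_of_mem htS] using ih
    · have := hg (S := S) (S' := S ∪ T) Finset.subset_union_left (t := t) (by simp [htS, htT])
      linarith

theorem IsSubmodular.union_add_le (hg : IsSubmodular g) (hmono : Monotone g) (S T : Finset α) :
    g (S ∪ T) + g ∅ ≤ g S + g T := by
  induction T using Finset.induction_on with
  | empty => simp
  | insert t T htT ih =>
    rw [Finset.union_insert]
    by_cases htS : t ∈ S
    · rw [Finset.insert_eq_of_mem (Finset.mem_union_left T htS)]
      linarith [hmono (Finset.subset_insert t T)]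
    · have := hg (S := T) (S' := S ∪ T) Finset.subset_union_right (t := t) (by simp [htS, htT])
      linarith

theorem le_mul_of_card_le_mul (hg : ∀ S T, g (S ∪ T) ≤ g S + g T) {C : Finset α} {m : ℕ}
    {B : ℝ} (hB : ∀ T ⊆ C, T.card ≤ m → g T ≤ B) {n : ℕ} (hn : 1 ≤ n) :
    ∀ S ⊆ C, S.card ≤ n * m → g S ≤ n * B := by
  induction n, hn using Nat.le_induction with
  | base => simpa using hB
  | succ n _ ih =>
    intro S hSC hS
    obtain ⟨P, hPS, hP⟩ := Finset.exists_subset_card_eq (min_le_right m S.card)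
    have hrest : (S \ P).card ≤ n * m := by
      rw [Finset.card_sdiff_of_subset hPS, hP]
      rw [Nat.succ_mul] at hS
      omega
    calc g S = g (P ∪ S \ P) := by rw [Finset.union_sdiff_of_subset hPS]
      _ ≤ B + n * B := by
        grw [hg, hB P (hPS.trans hSC) (hP.trans_le (min_le_left _ _)),
          ih (S \ P) (Finset.sdiff_subset.trans hSC) hrest]
      _ = (n + 1 : ℕ) * B := by push_cast; ring

end SetFunction

section Greedy

variable {α : Type*} [DecidableEq α] {C : Finset α} {g : Finset α → ℝ} {seq : ℕ → Finset α}

theorem IsGreedyOn.subset (hseq : IsGreedyOn C g seq) (i : ℕ) : seq i ⊆ C := by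
  induction i with
  | zero => simp [hseq.1]
  | succ i ih =>
    obtain ⟨t, htC, hnext, -⟩ := hseq.2 i
    exact hnext ▸ Finset.insert_subset htC ih

theorem IsGreedyOn.congr {h : Finset α → ℝ} (hseq : IsGreedyOn C g seq)
    (hgh : ∀ S ⊆ C, g S = h S) : IsGreedyOn C h seq := by
  refine ⟨hseq.1, fun i => ?_⟩
  obtain ⟨t, htC, hnext, hmax⟩ := hseq.2 i
  refine ⟨t, htC, hnext, fun t' ht'C => ?_⟩
  have hins {u} (hu : u ∈ C) : insert u (seq i) ⊆ C := Finset.insert_subset hu (hseq.subset i)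
  rw [← hgh _ (hins ht'C), ← hgh _ (hins htC)]
  exact hmax t' ht'C

theorem IsGreedyOn.sub_le_card_mul (hseq : IsGreedyOn C g seq) (hmono : Monotone g)
    (hsub : IsSubmodular g) {T : Finset α} (hTC : T ⊆ C) (i : ℕ) :
    g T - g (seq i) ≤ T.card * (g (seq (i + 1)) - g (seq i)) := by
  obtain ⟨t, -, hnext, hmax⟩ := hseq.2 i
  calc g T - g (seq i) ≤ g (seq i ∪ T) - g (seq i) := by
        linarith [hmono (Finset.subset_union_right (s₁ := seq i) (s₂ := T))]
    _ ≤ ∑ u ∈ T, (g (insert u (seq i)) - g (seq i)) := hsub.union_sub_le_sum _ _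
    _ ≤ ∑ _u ∈ T, (g (seq (i + 1)) - g (seq i)) :=
        Finset.sum_le_sum fun u hu => by rw [hnext]; linarith [hmax u (hTC hu)]
    _ = T.card * (g (seq (i + 1)) - g (seq i)) := by rw [Finset.sum_const, nsmul_eq_mul]

theorem IsGreedyOn.sub_le_one_sub_inv_pow_mul (hseq : IsGreedyOn C g seq) (hmono : Monotone g)
    (hsub : IsSubmodular g) {T : Finset α} (hTC : T ⊆ C) {k : ℕ} (hk : 0 < k)
    (hTk : T.card ≤ k) (i : ℕ) :
    g T - g (seq i) ≤ (1 - 1 / k) ^ i * (g T - g ∅) := by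
  induction i with
  | zero => simp [hseq.1]
  | succ i ih =>
    have hk' : (0 : ℝ) < k := by exact_mod_cast hk
    have hgain : 0 ≤ g (seq (i + 1)) - g (seq i) := by
      obtain ⟨t, -, hnext, -⟩ := hseq.2 i
      rw [hnext]
      linarith [hmono (Finset.subset_insert t (seq i))]
    have hstep : g T - g (seq i) ≤ k * (g (seq (i + 1)) - g (seq i)) :=
      (hseq.sub_le_card_mul hmono hsub hTC i).trans
        (mul_le_mul_of_nonneg_right (by exact_mod_cast hTk) hgain)
    have hcoef : 0 ≤ 1 - 1 / (k : ℝ) := by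
      rw [sub_nonneg, div_le_one hk']
      exact_mod_cast hk
    calc g T - g (seq (i + 1)) = (g T - g (seq i)) - (g (seq (i + 1)) - g (seq i)) := by ring
      _ ≤ (g T - g (seq i)) - (g T - g (seq i)) / k := by
          gcongr
          rw [div_le_iff₀ hk']
          linarith
      _ = (1 - 1 / k) * (g T - g (seq i)) := by ring
      _ ≤ (1 - 1 / k) * ((1 - 1 / k) ^ i * (g T - g ∅)) := by gcongr
      _ = (1 - 1 / k) ^ (i + 1) * (g T - g ∅) := by ring

theorem IsGreedyOn.one_sub_exp_neg_one_mul_le (hseq : IsGreedyOn C g seq) (hmono : Monotone g)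
    (hsub : IsSubmodular g) {T : Finset α} (hTC : T ⊆ C) {k : ℕ} (hTk : T.card ≤ k) :
    (1 - Real.exp (-1)) * (g T - g ∅) ≤ g (seq k) - g ∅ := by
  rcases Nat.eq_zero_or_pos k with rfl | hk
  · simp [Finset.card_eq_zero.mp (Nat.le_zero.mp hTk), hseq.1]
  have hT : 0 ≤ g T - g ∅ := sub_nonneg.mpr (hmono (Finset.empty_subset T))
  have hpow : (1 - 1 / (k : ℝ)) ^ k ≤ Real.exp (-1) :=
    Real.one_sub_div_pow_le_exp_neg (by exact_mod_cast hk)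
  nlinarith [hseq.sub_le_one_sub_inv_pow_mul hmono hsub hTC hk hTk k]

theorem IsGreedyOn.one_sub_exp_neg_one_mul_le_mul (hseq : IsGreedyOn C g seq)
    (hmono : Monotone g) (hsub : IsSubmodular g) (hg0 : g ∅ = 0) {k n : ℕ} (hn : 1 ≤ n)
    {S : Finset α} (hSC : S ⊆ C) (hS : S.card ≤ n * k) :
    (1 - Real.exp (-1)) * g S ≤ n * g (seq k) := by
  have hc : 0 ≤ 1 - Real.exp (-1) := by simp [Real.exp_le_one_iff]
  refine le_mul_of_card_le_mul (g := fun S => (1 - Real.exp (-1)) * g S) (fun S T => ?_)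
    (fun T hTC hTk => ?_) hn S hSC hS
  · nlinarith [hsub.union_add_le hmono S T]
  · simpa [hg0] using hseq.one_sub_exp_neg_one_mul_le hmono hsub hTC hTk

end Greedy

section Coverage

variable {β : Type*} [DecidableEq β]

noncomputable def coverIndicator (p S : Finset β) : ℝ :=
  if Disjoint p S then 0 else 1

theorem coverIndicator_monotone (p : Finset β) : Monotone (coverIndicator p) := by
  intro S S' hSS'
  have hdisj : Disjoint p S' → Disjoint p S := fun h => h.mono_right hSS'
  unfold coverIndicator
  split_ifs <;> norm_num
  tauto

theorem coverIndicator_isSubmodular (p : Finset β) : IsSubmodular (coverIndicator p) := by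
  intro S S' hSS' t _
  have hdisj : Disjoint p S' → Disjoint p S := fun h => h.mono_right hSS'
  unfold coverIndicator
  simp only [Finset.disjoint_insert_right]
  split_ifs <;> norm_num <;> tauto

variable {ι : Type*}

noncomputable def weightedCoverage (A : Finset ι) (c : ι → ℝ) (p : ι → Finset β)
    (S : Finset β) : ℝ :=
  ∑ i ∈ A, c i * coverIndicator (p i) S

variable {A : Finset ι} {c : ι → ℝ} (p : ι → Finset β)

theorem weightedCoverage_monotone (hc : ∀ i ∈ A, 0 ≤ c i) : Monotone (weightedCoverage A c p) :=
  monotone_sum hc fun i _ => coverIndicator_monotone (p i)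

theorem weightedCoverage_isSubmodular (hc : ∀ i ∈ A, 0 ≤ c i) :
    IsSubmodular (weightedCoverage A c p) :=
  IsSubmodular.sum hc fun i _ => coverIndicator_isSubmodular (p i)

theorem weightedCoverage_empty : weightedCoverage A c p ∅ = 0 := by
  simp [weightedCoverage, coverIndicator]

end Coverage

section Welfare

variable [DecidableEq Target] {N : Agent → Finset Target} {f : Target → Bool}

theorem Q_le_one (S : Finset Target) (x : Agent) : Q N f S x ≤ 1 := by
  have hneg : ((negN N f x ∩ S).card : ℝ) ≤ (negN N f x).card := by
    exact_mod_cast Finset.card_le_card Finset.inter_subset_left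
  unfold Q
  split_ifs
  · rfl
  · exact div_le_one_of_le₀ (by linarith) (by positivity)
  · exact zero_le_one

theorem Q_of_forall_mem {S : Finset Target} (hS : ∀ t ∈ S, f t = true) (x : Agent) :
    Q N f S x = if (posN N f x ∩ S).Nonempty then 1 else Q N f ∅ x := by
  have hneg : negN N f x ∩ S = ∅ := by
    ext t
    simp only [negN, Finset.mem_inter, Finset.mem_filter, Finset.notMem_empty, iff_false]
    rintro ⟨⟨-, hft⟩, htS⟩
    simp [hS t htS] at hft
  unfold Q
  simp [hneg]

theorem Ggain_eq_weightedCoverage [Fintype Target] (A : Finset Agent) {S : Finset Target}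
    (hS : S ⊆ Finset.univ.filter fun t => f t = true) :
    Ggain N f A S = weightedCoverage A (fun x => 1 - Q N f ∅ x) (posN N f) S := by
  have hpos : ∀ t ∈ S, f t = true := fun t ht => (Finset.mem_filter.mp (hS ht)).2
  unfold Ggain weightedCoverage coverIndicator
  rw [← Finset.sum_sub_distrib]
  refine Finset.sum_congr rfl fun x _ => ?_
  simp only [Q_of_forall_mem hpos, ← Finset.not_disjoint_iff_nonempty_inter]
  split_ifs <;> ring

end Welfare

theorem grouped_greedy_fairness_general [Fintype Agent] [Fintype Target] [DecidableEq Target]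
    (N : Agent → Finset Target) (f : Target → Bool)
    (w : ℕ) (A : Fin w → Finset Agent)
    (K : ℕ) (a : Fin w)
    (seq : ℕ → Finset Target)
    (hgreedy : IsGreedyOn (Finset.univ.filter fun t => f t = true) (Ggain N f (A a)) seq) :
    ((1 - 1 / Real.exp 1) / (w : ℝ)) *
        sSup ((fun S => Ggain N f (A a) S) ''
          {S : Finset Target | S ⊆ Finset.univ.filter (fun t => f t = true) ∧ S.card ≤ K})
      ≤ Ggain N f (A a) (seq ((K + w - 1) / w)) := by
  have hw : 0 < w := a.pos
  have hKk : K ≤ w * ((K + w - 1) / w) := by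
    have := Nat.lt_div_mul_add (a := K + w - 1) hw
    rw [mul_comm]; omega
  set C := Finset.univ.filter fun t => f t = true
  set k := (K + w - 1) / w
  set g := weightedCoverage (A a) (fun x => 1 - Q N f ∅ x) (posN N f)
  have hweight : ∀ x ∈ A a, 0 ≤ 1 - Q N f ∅ x := fun x _ => sub_nonneg.mpr (Q_le_one ∅ x)
  have hgain : ∀ S ⊆ C, Ggain N f (A a) S = g S := fun S hS => Ggain_eq_weightedCoverage _ hS
  have hc : 0 < 1 - Real.exp (-1) := by simp [Real.exp_lt_one_iff]
  have hbound : ∀ S ⊆ C, S.card ≤ K → Ggain N f (A a) S ≤ w * g (seq k) / (1 - Real.exp (-1)) :=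
    fun S hSC hSK => by
      rw [hgain S hSC, le_div_iff₀ hc, mul_comm]
      exact (hgreedy.congr hgain).one_sub_exp_neg_one_mul_le_mul
        (weightedCoverage_monotone _ hweight) (weightedCoverage_isSubmodular _ hweight)
        (weightedCoverage_empty _) hw hSC (hSK.trans hKk)
  have hsSup : sSup ((fun S => Ggain N f (A a) S) '' {S | S ⊆ C ∧ S.card ≤ K}) ≤
      w * g (seq k) / (1 - Real.exp (-1)) :=
    csSup_le ⟨_, ∅, ⟨Finset.empty_subset C, by simp⟩, rfl⟩
      (Set.forall_mem_image.mpr fun S hS => hbound S hS.1 hS.2)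
  rw [hgain _ (hgreedy.subset k), one_div, ← Real.exp_neg]
  calc (1 - Real.exp (-1)) / w * sSup _
      ≤ (1 - Real.exp (-1)) / w * (w * g (seq k) / (1 - Real.exp (-1))) := by gcongr
    _ = g (seq k) := by field_simp

/-- Grouped fairness guarantee with positive reveals only: running greedy on group `a`'s
gain with budget `K_a = ⌈K/w⌉` over the positive targets achieves, for that group, at
least a `(1 − 1/e)/w` fraction of the optimal gain `OPT_a^K` achievable for the group
alone with the full budget `K`. -/
theorem grouped_greedy_fairness [Fintype Agent] [Fintype Target] [DecidableEq Target]
    (N : Agent → Finset Target) (f : Target → Bool)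
    (w : ℕ) (hw : 1 ≤ w) (A : Fin w → Finset Agent)
    (K : ℕ) (hK : w ≤ K) (a : Fin w)
    (seq : ℕ → Finset Target)
    (hgreedy : IsGreedyOn (Finset.univ.filter fun t => f t = true) (Ggain N f (A a)) seq) :
    ((1 - 1 / Real.exp 1) / (w : ℝ)) *
        sSup ((fun S => Ggain N f (A a) S) ''
          {S : Finset Target | S ⊆ Finset.univ.filter (fun t => f t = true) ∧ S.card ≤ K})
      ≤ Ggain N f (A a) (seq ((K + w - 1) / w)) :=
  grouped_greedy_fairness_general N f w A K a seq hgreedy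
end
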